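/- Let (n_Ω) be a uniformly bounded family of measurable functions on [0,1] with ∫_0^s n_Ω(τ)dτ → 0 as Ω → ∞, uniformly in s ∈ [0,1]. Then for all limited integers k ≥ 1 and ν ≥ 0, the iterated integral ∫_0^t ∫_0^{τ_k} ⋯ ∫_0^{τ_2} τ_1^ν · n_Ω(τ_1) dτ_1 ⋯ dτ_k tends to 0 as Ω → ∞, for every t ∈ [0,1]. -/

import Mathlib

open Filter MeasureTheory

noncomputable def iterInt (g : ℝ → ℝ) : ℕ → ℝ → ℝ
  | 0 => g
  | (k + 1) => fun t => ∫ τ in (0:ℝ)..t, iterInt g k τ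

lemma myIntegrableOn {g : ℝ → ℝ} {M : ℝ} (hg : Measurable g)
    (hb : ∀ t ∈ Set.Icc (0:ℝ) 1, |g t| ≤ M) :
    IntegrableOn g (Set.Icc (0:ℝ) 1) := by
  refine Integrable.mono' (integrable_const M) hg.aestronglyMeasurable ?_
  rw [ae_restrict_iff' measurableSet_Icc]
  exact ae_of_all _ fun t ht => by simpa [Real.norm_eq_abs] using hb t ht

lemma myII {g : ℝ → ℝ} {M : ℝ} (hg : Measurable g)
    (hb : ∀ t ∈ Set.Icc (0:ℝ) 1, |g t| ≤ M) {a b : ℝ}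
    (h : Set.uIcc a b ⊆ Set.Icc (0:ℝ) 1) : IntervalIntegrable g volume a b :=
  ((myIntegrableOn hg hb).mono_set h).intervalIntegrable

lemma triangle_fubini {g : ℝ → ℝ} {M : ℝ} (hg : Measurable g)
    (hb : ∀ t ∈ Set.Icc (0:ℝ) 1, |g t| ≤ M) {s : ℝ} (hs0 : 0 ≤ s) (hs1 : s ≤ 1)
    (f : ℝ → ℝ) (hf : Measurable f) (C : ℝ) (hfC : ∀ u ∈ Set.Icc (0:ℝ) 1, |f u| ≤ C) :
    ∫ τ in (0:ℝ)..s, (∫ u in (0:ℝ)..τ, f u) * g τ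
      = ∫ u in (0:ℝ)..s, f u * ∫ τ in u..s, g τ := by
  have hsub : Set.Ioc (0:ℝ) s ⊆ Set.Icc (0:ℝ) 1 := fun x hx => ⟨hx.1.le, hx.2.trans hs1⟩
  set μ := volume.restrict (Set.Ioc (0:ℝ) s) with hμ
  set F : ℝ → ℝ → ℝ := fun τ u => if u ≤ τ then f u * g τ else 0 with hF
  have hM0 : 0 ≤ M := le_trans (abs_nonneg _) (hb 0 ⟨le_refl 0, zero_le_one⟩)
  have hC0 : 0 ≤ C := le_trans (abs_nonneg _) (hfC 0 ⟨le_refl 0, zero_le_one⟩)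
  have hFm : Measurable (Function.uncurry F) :=
    Measurable.ite (measurableSet_le measurable_snd measurable_fst)
      ((hf.comp measurable_snd).mul (hg.comp measurable_fst)) measurable_const
  have hFi : Integrable (Function.uncurry F) (μ.prod μ) := by
    refine Integrable.mono' (integrable_const (C * M)) hFm.aestronglyMeasurable ?_
    rw [hμ, Measure.prod_restrict, ae_restrict_iff' (measurableSet_Ioc.prod measurableSet_Ioc)]
    refine ae_of_all _ fun p hp => ?_
    obtain ⟨h1, h2⟩ := hp
    simp only [Function.uncurry, hF, Real.norm_eq_abs]
    split
    · calc |f p.2 * g p.1| = |f p.2| * |g p.1| := abs_mul _ _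
        _ ≤ C * M := mul_le_mul (hfC _ (hsub h2)) (hb _ (hsub h1)) (abs_nonneg _) hC0
    · simp [mul_nonneg hC0 hM0]
  have hswap := integral_integral_swap hFi
  have hL : (∫ τ, (∫ u, F τ u ∂μ) ∂μ) = ∫ τ in (0:ℝ)..s, (∫ u in (0:ℝ)..τ, f u) * g τ := by
    rw [intervalIntegral.integral_of_le hs0]
    refine setIntegral_congr_fun measurableSet_Ioc fun τ hτ => ?_
    have h1 : (fun u => F τ u) = (Set.Iic τ).indicator (fun u => f u * g τ) := by
      funext u; simp [hF, Set.indicator_apply, Set.mem_Iic]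
    rw [h1, setIntegral_indicator measurableSet_Iic, Set.Ioc_inter_Iic,
      inf_eq_right.mpr hτ.2, integral_mul_const, intervalIntegral.integral_of_le hτ.1.le]
  have hR : (∫ u, (∫ τ, F τ u ∂μ) ∂μ) = ∫ u in (0:ℝ)..s, f u * ∫ τ in u..s, g τ := by
    rw [intervalIntegral.integral_of_le hs0]
    refine setIntegral_congr_fun measurableSet_Ioc fun u hu => ?_
    have h1 : (fun τ => F τ u) = (Set.Ici u).indicator (fun τ => f u * g τ) := by
      funext τ; simp [hF, Set.indicator_apply, Set.mem_Ici]
    have h2 : Set.Ioc (0:ℝ) s ∩ Set.Ici u = Set.Icc u s := by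
      ext x
      simp only [Set.mem_inter_iff, Set.mem_Ioc, Set.mem_Ici, Set.mem_Icc]
      exact ⟨fun ⟨⟨_, hxs⟩, hux⟩ => ⟨hux, hxs⟩,
        fun ⟨hux, hxs⟩ => ⟨⟨lt_of_lt_of_le hu.1 hux, hxs⟩, hux⟩⟩
    rw [h1, setIntegral_indicator measurableSet_Ici, h2, integral_const_mul,
      integral_Icc_eq_integral_Ioc, ← intervalIntegral.integral_of_le hu.2]
  rw [← hL, ← hR]; exact hswap

lemma key_estimate {g : ℝ → ℝ} {M ε : ℝ} (hg : Measurable g)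
    (hb : ∀ t ∈ Set.Icc (0:ℝ) 1, |g t| ≤ M)
    (hε : ∀ s ∈ Set.Icc (0:ℝ) 1, |∫ τ in (0:ℝ)..s, g τ| ≤ ε) (ν : ℕ) :
    ∀ s ∈ Set.Icc (0:ℝ) 1, |∫ τ in (0:ℝ)..s, τ ^ ν * g τ| ≤ (2 * ν + 2) * ε := by
  have hε0 : 0 ≤ ε := by simpa using hε 0 ⟨le_refl 0, zero_le_one⟩
  intro s hs
  cases ν with
  | zero =>
    simp only [pow_zero, one_mul, Nat.cast_zero]
    calc |∫ τ in (0:ℝ)..s, g τ| ≤ ε := hε s hs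
      _ ≤ (2 * 0 + 2) * ε := by linarith
  | succ m =>
    have hprim : ∀ τ : ℝ, (∫ u in (0:ℝ)..τ, ((m:ℝ)+1) * u ^ m) = τ ^ (m+1) := by
      intro τ
      have hm : ((m:ℝ)+1) ≠ 0 := by positivity
      rw [intervalIntegral.integral_const_mul, integral_pow]
      field_simp
      simp
    have heq := triangle_fubini hg hb hs.1 hs.2 (fun u => ((m:ℝ)+1) * u ^ m)
      ((measurable_const).mul (measurable_id.pow_const m)) ((m:ℝ)+1)
      (fun u hu => by
        rw [abs_mul, abs_pow]
        calc |((m:ℝ)+1)| * |u| ^ m ≤ ((m:ℝ)+1) * 1 := by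
              refine mul_le_mul (le_of_eq (abs_of_nonneg (by positivity)))
                (pow_le_one₀ (abs_nonneg _) (abs_le.2 ⟨by linarith [hu.1], hu.2⟩))
                (by positivity) (by positivity)
          _ = (m:ℝ)+1 := mul_one _)
    have heq2 : (∫ τ in (0:ℝ)..s, τ ^ (m+1) * g τ)
        = ∫ u in (0:ℝ)..s, (((m:ℝ)+1) * u ^ m) * ∫ τ in u..s, g τ := by
      rw [← heq]
      refine intervalIntegral.integral_congr fun τ _ => ?_
      rw [hprim]
    rw [heq2]
    have hbound : ∀ u ∈ Set.uIoc (0:ℝ) s,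
        ‖(((m:ℝ)+1) * u ^ m) * ∫ τ in u..s, g τ‖ ≤ ((m:ℝ)+1) * (2 * ε) := by
      intro u hu
      rw [Set.uIoc_of_le hs.1] at hu
      have hu01 : u ∈ Set.Icc (0:ℝ) 1 := ⟨hu.1.le, hu.2.trans hs.2⟩
      have hii1 : IntervalIntegrable g volume 0 s :=
        myII hg hb (by rw [Set.uIcc_of_le hs.1]; exact fun x hx => ⟨hx.1, hx.2.trans hs.2⟩)
      have hii2 : IntervalIntegrable g volume 0 u :=
        myII hg hb (by rw [Set.uIcc_of_le hu01.1]; exact fun x hx => ⟨hx.1, hx.2.trans hu01.2⟩)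
      have hsub := intervalIntegral.integral_interval_sub_left hii1 hii2
      have h2ε : |∫ τ in u..s, g τ| ≤ 2 * ε := by
        rw [← hsub]
        calc |(∫ τ in (0:ℝ)..s, g τ) - ∫ τ in (0:ℝ)..u, g τ|
            ≤ |∫ τ in (0:ℝ)..s, g τ| + |∫ τ in (0:ℝ)..u, g τ| := abs_sub _ _
          _ ≤ 2 * ε := by linarith [hε s hs, hε u hu01]
      rw [Real.norm_eq_abs, abs_mul, abs_mul, abs_pow]
      refine mul_le_mul ?_ h2ε (abs_nonneg _) (by positivity)
      calc |((m:ℝ)+1)| * |u| ^ m ≤ ((m:ℝ)+1) * 1 :=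
            mul_le_mul (le_of_eq (abs_of_nonneg (by positivity)))
              (pow_le_one₀ (abs_nonneg _) (abs_le.2 ⟨by linarith [hu01.1], hu01.2⟩))
              (by positivity) (by positivity)
        _ = (m:ℝ)+1 := mul_one _
    have := intervalIntegral.norm_integral_le_of_norm_le_const hbound
    rw [Real.norm_eq_abs] at this
    have hs01 : |s - 0| ≤ 1 := by rw [sub_zero, abs_of_nonneg hs.1]; exact hs.2
    calc |∫ u in (0:ℝ)..s, (((m:ℝ)+1) * u ^ m) * ∫ τ in u..s, g τ|
        ≤ ((m:ℝ)+1) * (2 * ε) * |s - 0| := this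
      _ ≤ ((m:ℝ)+1) * (2 * ε) * 1 :=
          mul_le_mul_of_nonneg_left hs01 (by positivity)
      _ ≤ (2 * (m+1 : ℕ) + 2) * ε := by push_cast; nlinarith

theorem iterated_integrals_attenuate_noise
    (n : ℝ → ℝ → ℝ) (M : ℝ)
    (hmeas : ∀ Ω, Measurable (n Ω))
    (hbound : ∀ Ω, ∀ t ∈ Set.Icc (0:ℝ) 1, |n Ω t| ≤ M)
    (hunif : ∀ ε > (0:ℝ), ∃ Ω₀ : ℝ, ∀ Ω ≥ Ω₀, ∀ s ∈ Set.Icc (0:ℝ) 1,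
      |∫ τ in (0:ℝ)..s, n Ω τ| < ε) :
    ∀ k : ℕ, 1 ≤ k → ∀ ν : ℕ, ∀ t ∈ Set.Icc (0:ℝ) 1,
      Tendsto (fun Ω : ℝ => iterInt (fun τ => τ ^ ν * n Ω τ) k t)
        atTop (nhds 0) := by
  intro k hk ν t ht
  have hM0 : 0 ≤ M := le_trans (abs_nonneg _) (hbound 0 0 ⟨le_refl 0, zero_le_one⟩)
  have huni : ∀ K : ℕ, 1 ≤ K → ∀ ε > (0:ℝ), ∃ Ω₀ : ℝ, ∀ Ω ≥ Ω₀,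
      ∀ s ∈ Set.Icc (0:ℝ) 1, |iterInt (fun τ => τ ^ ν * n Ω τ) K s| ≤ ε := by
    intro K
    induction K with
    | zero => omega
    | succ K ih =>
      intro _ ε hε
      rcases Nat.eq_zero_or_pos K with hK0 | hK1
      · subst hK0
        have hε' : ε / (2 * ν + 2) > 0 := by positivity
        obtain ⟨Ω₀, hΩ₀⟩ := hunif _ hε'
        refine ⟨Ω₀, fun Ω hΩ s hs => ?_⟩
        have hkey := key_estimate (hmeas Ω) (hbound Ω)
          (fun s' hs' => (hΩ₀ Ω hΩ s' hs').le) ν s hs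
        have hcancel : (2 * (ν:ℝ) + 2) * (ε / (2 * ν + 2)) = ε := by
          field_simp
        simp only [iterInt] at *
        calc |∫ τ in (0:ℝ)..s, τ ^ ν * n Ω τ| ≤ (2 * ν + 2) * (ε / (2 * ν + 2)) := hkey
          _ = ε := hcancel
      · obtain ⟨Ω₀, hΩ₀⟩ := ih hK1 ε hε
        refine ⟨Ω₀, fun Ω hΩ s hs => ?_⟩
        have hb2 : ∀ x ∈ Set.uIoc (0:ℝ) s,
            ‖iterInt (fun τ => τ ^ ν * n Ω τ) K x‖ ≤ ε := by
          intro x hx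
          rw [Set.uIoc_of_le hs.1] at hx
          exact (Real.norm_eq_abs _) ▸ hΩ₀ Ω hΩ x ⟨hx.1.le, hx.2.trans hs.2⟩
        have := intervalIntegral.norm_integral_le_of_norm_le_const hb2
        rw [Real.norm_eq_abs] at this
        show |∫ τ in (0:ℝ)..s, iterInt (fun τ => τ ^ ν * n Ω τ) K τ| ≤ ε
        calc |∫ τ in (0:ℝ)..s, iterInt (fun τ => τ ^ ν * n Ω τ) K τ|
            ≤ ε * |s - 0| := this
          _ ≤ ε * 1 := mul_le_mul_of_nonneg_left
              (by rw [sub_zero, abs_of_nonneg hs.1]; exact hs.2) hε.le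
          _ = ε := mul_one ε
  rw [Metric.tendsto_atTop]
  intro ε hε
  obtain ⟨Ω₀, hΩ₀⟩ := huni k hk (ε / 2) (by positivity)
  refine ⟨Ω₀, fun Ω hΩ => ?_⟩
  rw [Real.dist_eq, sub_zero]
  calc |iterInt (fun τ => τ ^ ν * n Ω τ) k t| ≤ ε / 2 := hΩ₀ Ω hΩ t ht
    _ < ε := by linarith
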